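/- For every u ∈ L²(ℝⁿ), R_β A u → u in L²(ℝⁿ) as β ↓ 0; that is, the family (R_β)_{β>0} defines a regularization method for the equation A u = g. -/

import Mathlib

/-
STATEMENT 2: For every u ∈ L²(ℝⁿ), R_β A u → u in L²(ℝⁿ) as β ↓ 0,
where R_β g is the unique minimizer of J_β(·, A, g); i.e. (R_β)_{β>0} is a
regularization method for the equation A u = g.
-/

open MeasureTheory Filter ContinuousLinearMap
open scoped Topology ENNReal

noncomputable section

abbrev Rn (n : ℕ) : Type := EuclideanSpace ℝ (Fin n)
abbrev L2 (n : ℕ) : Type := MeasureTheory.Lp ℂ 2 (volume : Measure (Rn n))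

/-- The symbol ψ(ξ) = exp(−(2π|ξ|)^{2τ} ∫₀ᵀ γ(λ)dλ). -/
def psi (n : ℕ) (τ T : ℝ) (γ : ℝ → ℝ) (ξ : Rn n) : ℝ :=
  Real.exp (-((2 * Real.pi * ‖ξ‖) ^ (2 * τ)) * ∫ t in Set.Ioc (0 : ℝ) T, γ t)

/-- The mollification φ_β ⋆ f, where φ_β(x) = β^{−n} φ(x/β). -/
def mollify (n : ℕ) (φ : Rn n → ℝ) (β : ℝ) (f : Rn n → ℂ) (x : Rn n) : ℂ :=
  ∫ y, (((β ^ n)⁻¹ * φ (β⁻¹ • (x - y)) : ℝ) : ℂ) * f y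


open Complex
open scoped FourierTransform RealInnerProductSpace ComplexConjugate

section AuxLemmas

variable {n : ℕ} {φ : Rn n → ℝ}

lemma conv_integrable {k f : Rn n → ℂ} (hk : Integrable k volume) (hf : Integrable f volume) :
    Integrable (fun x => ∫ y, k (x - y) * f y) (volume : Measure (Rn n)) := by
  have h := (hf.integrable_convolution (ContinuousLinearMap.mul ℂ ℂ) hk)
  refine h.congr (Eventually.of_forall fun x => ?_)
  simp only [convolution, ContinuousLinearMap.mul_apply']
  exact integral_congr_ae (Eventually.of_forall fun y => mul_comm _ _)

lemma fourier_conv {k f : Rn n → ℂ} (hk : Integrable k volume) (hf : Integrable f volume)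
    (ξ : Rn n) :
    FourierTransform.fourier (fun x => ∫ y, k (x - y) * f y) ξ
      = FourierTransform.fourier k ξ * FourierTransform.fourier f ξ := by
  have hprod : Integrable (fun p : Rn n × Rn n => k (p.1 - p.2) * f p.2)
      ((volume : Measure (Rn n)).prod volume) := by
    have h := hf.convolution_integrand (ContinuousLinearMap.mul ℂ ℂ) hk
    refine h.congr (Eventually.of_forall fun p => ?_)
    simp [ContinuousLinearMap.mul_apply', mul_comm]
  have hprod2 : Integrable (fun p : Rn n × Rn n =>
      (𝐞 (-⟪p.1, ξ⟫) : ℂ) * (k (p.1 - p.2) * f p.2))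
      ((volume : Measure (Rn n)).prod volume) := by
    refine hprod.bdd_mul (c := 1) ?_ (Eventually.of_forall fun p => (Circle.norm_coe _).le)
    refine Continuous.aestronglyMeasurable ?_
    exact continuous_subtype_val.comp (Real.continuous_fourierChar.comp
      ((continuous_fst.inner continuous_const).neg))
  calc FourierTransform.fourier (fun x => ∫ y, k (x - y) * f y) ξ
      = ∫ x, ∫ y, (𝐞 (-⟪x, ξ⟫) : ℂ) * (k (x - y) * f y) := by
        rw [Real.fourier_eq]
        refine integral_congr_ae (Eventually.of_forall fun x => ?_)
        show 𝐞 (-⟪x, ξ⟫) • (∫ y, k (x - y) * f y) = ∫ y, (𝐞 (-⟪x, ξ⟫) : ℂ) * (k (x - y) * f y)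
        rw [Circle.smul_def, smul_eq_mul, ← integral_const_mul]
    _ = ∫ y, ∫ x, (𝐞 (-⟪x, ξ⟫) : ℂ) * (k (x - y) * f y) := integral_integral_swap hprod2
    _ = ∫ y, ((𝐞 (-⟪y, ξ⟫) : ℂ) * f y) * ∫ x, (𝐞 (-⟪x, ξ⟫) : ℂ) * k x := by
        refine integral_congr_ae (Eventually.of_forall fun y => ?_)
        show (∫ x, (𝐞 (-⟪x, ξ⟫) : ℂ) * (k (x - y) * f y))
          = ((𝐞 (-⟪y, ξ⟫) : ℂ) * f y) * ∫ x, (𝐞 (-⟪x, ξ⟫) : ℂ) * k x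
        rw [← integral_add_right_eq_self (fun x => (𝐞 (-⟪x, ξ⟫) : ℂ) * (k (x - y) * f y)) y]
        rw [← integral_const_mul]
        refine integral_congr_ae (Eventually.of_forall fun x => ?_)
        have he : (𝐞 (-⟪x + y, ξ⟫) : ℂ) = (𝐞 (-⟪x, ξ⟫) : ℂ) * (𝐞 (-⟪y, ξ⟫) : ℂ) := by
          rw [inner_add_left, neg_add, AddChar.map_add_eq_mul, Circle.coe_mul]
        simp only [add_sub_cancel_right, he]
        ring
    _ = FourierTransform.fourier k ξ * FourierTransform.fourier f ξ := by
        rw [integral_mul_const, Real.fourier_eq, Real.fourier_eq]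
        simp_rw [Circle.smul_def, smul_eq_mul]
        ring

lemma kernel_integrable (hφ : Integrable φ (volume : Measure (Rn n))) {β : ℝ} (hβ : 0 < β) :
    Integrable (fun x : Rn n => (((β ^ n)⁻¹ * φ (β⁻¹ • x) : ℝ) : ℂ))
      (volume : Measure (Rn n)) := by
  have h1 : Integrable (fun x : Rn n => φ (β⁻¹ • x)) volume :=
    (integrable_comp_smul_iff volume φ (inv_ne_zero hβ.ne')).2 hφ
  exact (h1.const_mul ((β ^ n)⁻¹)).ofReal

lemma kernel_fourier (hφ : Integrable φ (volume : Measure (Rn n))) {β : ℝ} (hβ : 0 < β)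
    (ξ : Rn n) :
    FourierTransform.fourier (fun x : Rn n => (((β ^ n)⁻¹ * φ (β⁻¹ • x) : ℝ) : ℂ)) ξ
      = FourierTransform.fourier (fun x : Rn n => (φ x : ℂ)) (β • ξ) := by
  rw [Real.fourier_eq, Real.fourier_eq]
  have key := MeasureTheory.Measure.integral_comp_inv_smul (volume : Measure (Rn n))
    (fun z : Rn n => (𝐞 (-⟪β • z, ξ⟫) : Circle) • ((((β ^ n)⁻¹ * φ z : ℝ)) : ℂ)) β
  have h1 : (fun x : Rn n => 𝐞 (-⟪x, ξ⟫) • ((((β ^ n)⁻¹ * φ (β⁻¹ • x) : ℝ)) : ℂ))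
      = fun x : Rn n => (fun z : Rn n =>
        (𝐞 (-⟪β • z, ξ⟫) : Circle) • ((((β ^ n)⁻¹ * φ z : ℝ)) : ℂ)) (β⁻¹ • x) := by
    funext x
    simp only [smul_inv_smul₀ hβ.ne']
  rw [h1, key, finrank_euclideanSpace_fin, _root_.abs_of_nonneg (pow_nonneg hβ.le n)]
  have h2 : ∀ z : Rn n, (𝐞 (-⟪β • z, ξ⟫) : Circle) • ((((β ^ n)⁻¹ * φ z : ℝ)) : ℂ)
      = (((β ^ n)⁻¹ : ℝ) : ℂ) * (𝐞 (-⟪z, β • ξ⟫) • ((φ z : ℝ) : ℂ)) := by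
    intro z
    rw [real_inner_smul_left, ← real_inner_smul_right]
    simp only [Circle.smul_def, smul_eq_mul, ofReal_mul]
    ring
  simp_rw [h2, integral_const_mul]
  rw [Complex.real_smul, ← mul_assoc, ← ofReal_mul,
    mul_inv_cancel₀ (pow_ne_zero n hβ.ne'), ofReal_one, one_mul]

/-- the symbol of the mollifier -/
def qsym (φ : Rn n → ℝ) : Rn n → ℂ := FourierTransform.fourier (fun x => (φ x : ℂ))

lemma qsym_continuous (hφ : Integrable φ (volume : Measure (Rn n))) :
    Continuous (qsym φ) := by
  refine VectorFourier.fourierIntegral_continuous Real.continuous_fourierChar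
    (by exact continuous_inner (𝕜 := ℝ)) hφ.ofReal

lemma qsym_zero (hφ1 : ∫ x, φ x = 1) : qsym φ 0 = 1 := by
  unfold qsym
  rw [Real.fourier_eq]
  simp only [inner_zero_right, neg_zero, AddChar.map_zero_eq_one, one_smul]
  have h : ∫ v : Rn n, ((φ v : ℝ) : ℂ) = ((∫ v, φ v : ℝ) : ℂ) := integral_ofReal
  rw [h, hφ1, ofReal_one]

lemma qsym_norm_le (hφ : Integrable φ (volume : Measure (Rn n))) (ξ : Rn n) :
    ‖qsym φ ξ‖ ≤ ∫ x, ‖φ x‖ := by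
  have := VectorFourier.norm_fourierIntegral_le_integral_norm 𝐞
    (volume : Measure (Rn n)) (innerₗ (Rn n)) (fun x => (φ x : ℂ)) ξ
  have h2 : ‖qsym φ ξ‖ ≤ ∫ x, ‖(φ x : ℂ)‖ := this
  simpa using h2

lemma variational {E : Type*} [NormedAddCommGroup E] [InnerProductSpace ℂ E] (a b x y : E)
    (h : ∀ c : ℂ, ‖a‖ ^ 2 + ‖b‖ ^ 2 ≤ ‖a + c • x‖ ^ 2 + ‖b + c • y‖ ^ 2) :
    (inner ℂ a x : ℂ) + inner ℂ b y = 0 := by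
  set S : ℂ := (inner ℂ a x : ℂ) + inner ℂ b y with hS
  have key : ∀ t : ℝ, 0 ≤ -2 * t * ‖S‖ ^ 2
      + t ^ 2 * ‖S‖ ^ 2 * ‖x‖ ^ 2 + t ^ 2 * ‖S‖ ^ 2 * ‖y‖ ^ 2 := by
    intro t
    have hc := h (-(t : ℂ) * conj S)
    set c : ℂ := -(t : ℂ) * conj S with hcdef
    rw [norm_add_sq (𝕜 := ℂ), norm_add_sq (𝕜 := ℂ)] at hc
    have h1 : (inner ℂ a (c • x) : ℂ) = c * inner ℂ a x := inner_smul_right _ _ _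
    have h2 : (inner ℂ b (c • y) : ℂ) = c * inner ℂ b y := inner_smul_right _ _ _
    have hre : RCLike.re (inner ℂ a (c • x) : ℂ) + RCLike.re (inner ℂ b (c • y) : ℂ)
        = -t * ‖S‖ ^ 2 := by
      rw [h1, h2, ← map_add, ← mul_add, ← hS, hcdef]
      have e1 : -(t : ℂ) * conj S * S = ((-t * ‖S‖ ^ 2 : ℝ) : ℂ) := by
        rw [mul_assoc, Complex.conj_mul']
        push_cast
        ring
      rw [e1]
      rw [RCLike.re_to_complex, Complex.ofReal_re]
    have hnc : ‖c‖ = |t| * ‖S‖ := by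
      rw [hcdef, norm_mul, norm_neg, Complex.norm_real, Real.norm_eq_abs,
        RCLike.norm_conj]
    have hcx : ‖c • x‖ ^ 2 = t ^ 2 * ‖S‖ ^ 2 * ‖x‖ ^ 2 := by
      rw [norm_smul, mul_pow, hnc, mul_pow, _root_.sq_abs]
    have hcy : ‖c • y‖ ^ 2 = t ^ 2 * ‖S‖ ^ 2 * ‖y‖ ^ 2 := by
      rw [norm_smul, mul_pow, hnc, mul_pow, _root_.sq_abs]
    rw [hcx, hcy] at hc
    linarith [hc, hre]
  set M : ℝ := ‖x‖ ^ 2 + ‖y‖ ^ 2 with hM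
  have hM0 : 0 ≤ M := by positivity
  have hM1 : (0 : ℝ) < M + 1 := by linarith
  have hs : ‖S‖ ^ 2 = 0 := by
    have h1 := key (1 / (M + 1))
    have h2 := mul_nonneg h1 (sq_nonneg (M + 1))
    have e : (-2 * (1 / (M + 1)) * ‖S‖ ^ 2
        + (1 / (M + 1)) ^ 2 * ‖S‖ ^ 2 * ‖x‖ ^ 2
        + (1 / (M + 1)) ^ 2 * ‖S‖ ^ 2 * ‖y‖ ^ 2) * (M + 1) ^ 2
        = -2 * ‖S‖ ^ 2 * (M + 1) + ‖S‖ ^ 2 * ‖x‖ ^ 2 + ‖S‖ ^ 2 * ‖y‖ ^ 2 := by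
      field_simp
    rw [e] at h2
    nlinarith [mul_nonneg (sq_nonneg ‖S‖) hM0, sq_nonneg ‖S‖, hM]
  have : ‖S‖ = 0 := by nlinarith [norm_nonneg S]
  rwa [norm_eq_zero] at this

lemma memQ (hφint : Integrable φ (volume : Measure (Rn n))) (β : ℝ) (g : L2 n) :
    MemLp (fun ξ => qsym φ (β • ξ) * (g : Rn n → ℂ) ξ) 2 (volume : Measure (Rn n)) := by
  have hqm : Continuous (fun ξ : Rn n => qsym φ (β • ξ)) :=
    (qsym_continuous hφint).comp (continuous_id.const_smul β)
  refine MemLp.of_le_mul (c := ∫ x, ‖φ x‖) (Lp.memLp g)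
    (hqm.aestronglyMeasurable.mul (Lp.aestronglyMeasurable g))
    (Eventually.of_forall fun ξ => ?_)
  rw [norm_mul]
  exact mul_le_mul_of_nonneg_right (qsym_norm_le hφint _) (norm_nonneg _)

lemma multC (F : L2 n ≃ₗᵢ[ℂ] L2 n)
    (hF : ∀ f : L2 n, Integrable (⇑f) volume →
      ⇑(F f) =ᵐ[volume] FourierTransform.fourier (⇑f))
    (hφint : Integrable φ (volume : Measure (Rn n)))
    (C : ℝ → (L2 n →L[ℂ] L2 n))
    (hC : ∀ β : ℝ, 0 < β → ∀ f : L2 n, ⇑(C β f) =ᵐ[volume] mollify n φ β ⇑f)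
    {β : ℝ} (hβ : 0 < β) (f : L2 n) :
    ⇑(F (C β f)) =ᵐ[volume] fun ξ => qsym φ (β • ξ) * ⇑(F f) ξ := by
  set K : ℝ := ∫ x, ‖φ x‖ with hK
  have hK0 : 0 ≤ K := integral_nonneg fun x => norm_nonneg _
  -- the integrable case
  have hint : ∀ g : L2 n, Integrable (⇑g) volume →
      F (C β g) = (memQ hφint β (F g)).toLp _ := by
    intro g hg
    have h1 : ⇑(C β g) =ᵐ[volume] mollify n φ β ⇑g := hC β hβ g
    have hkint := kernel_integrable hφint hβ
    have hmoll : Integrable (mollify n φ β ⇑g) volume := conv_integrable hkint hg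
    have hCint : Integrable (⇑(C β g)) volume := hmoll.congr h1.symm
    have h2 : ⇑(F (C β g)) =ᵐ[volume] FourierTransform.fourier (⇑(C β g)) := hF _ hCint
    have h3 : ∀ ξ, FourierTransform.fourier (⇑(C β g)) ξ
        = qsym φ (β • ξ) * FourierTransform.fourier (⇑g) ξ := by
      intro ξ
      have e1 : FourierTransform.fourier (⇑(C β g)) ξ
          = FourierTransform.fourier (mollify n φ β ⇑g) ξ := by
        rw [Real.fourier_eq, Real.fourier_eq]
        exact integral_congr_ae (h1.mono fun x hx => by dsimp only; rw [hx])
      rw [e1]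
      have e2 := fourier_conv hkint hg ξ
      show _ = FourierTransform.fourier (fun x : Rn n => (φ x : ℂ)) (β • ξ) * _
      rw [← kernel_fourier hφint hβ ξ]
      exact e2
    apply Lp.ext
    refine (h2.trans ?_).trans (MemLp.coeFn_toLp _).symm
    have h4 := hF g hg
    filter_upwards [h4] with ξ hξ
    rw [h3 ξ, hξ]
  -- the general case
  have key : F (C β f) = (memQ hφint β (F f)).toLp _ := by
    have hb : ∀ ε : ℝ, 0 < ε →
        ‖F (C β f) - (memQ hφint β (F f)).toLp _‖ ≤ (‖C β‖ + K) * ε := by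
      intro ε hε
      obtain ⟨g0, hg0supp, hg0near, hg0cont, hg0mem⟩ :=
        (Lp.memLp f).exists_hasCompactSupport_eLpNorm_sub_le
          (by norm_num : (2 : ℝ≥0∞) ≠ ∞) (ε := ENNReal.ofReal ε)
          (by simpa using (ENNReal.ofReal_pos.2 hε).ne')
      set gl : L2 n := hg0mem.toLp g0 with hgl
      have hglint : Integrable (⇑gl) volume :=
        (hg0cont.integrable_of_hasCompactSupport hg0supp).congr (hg0mem.coeFn_toLp).symm
      have hfg : ‖f - gl‖ ≤ ε := by
        rw [Lp.norm_def]
        have e : ⇑(f - gl) =ᵐ[volume] ⇑f - g0 :=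
          (Lp.coeFn_sub f gl).trans
            (by filter_upwards [hg0mem.coeFn_toLp] with x hx; simp [hgl, hx])
        rw [eLpNorm_congr_ae e]
        exact ENNReal.toReal_le_of_le_ofReal hε.le hg0near
      have hglf : ‖gl - f‖ ≤ ε := by rwa [norm_sub_rev]
      have hQdiff : ‖((memQ hφint β (F gl)).toLp _ : L2 n) - (memQ hφint β (F f)).toLp _‖
          ≤ K * ‖F gl - F f‖ := by
        refine Lp.norm_le_mul_norm_of_ae_le_mul ?_
        filter_upwards [Lp.coeFn_sub ((memQ hφint β (F gl)).toLp _)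
            ((memQ hφint β (F f)).toLp _),
          (memQ hφint β (F gl)).coeFn_toLp, (memQ hφint β (F f)).coeFn_toLp,
          Lp.coeFn_sub (F gl) (F f)] with ξ h1 h2 h3 h4
        rw [h1]
        simp only [Pi.sub_apply]
        rw [h2, h3, h4]
        simp only [Pi.sub_apply]
        rw [← mul_sub, norm_mul]
        exact mul_le_mul_of_nonneg_right (qsym_norm_le hφint _) (norm_nonneg _)
      have t1 : ‖F (C β f) - F (C β gl)‖ ≤ ‖C β‖ * ε := by
        rw [← map_sub, F.norm_map, ← map_sub]
        exact ((C β).le_opNorm _).trans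
          (mul_le_mul_of_nonneg_left hfg (norm_nonneg _))
      have t2 : ‖F (C β gl) - (memQ hφint β (F f)).toLp _‖ ≤ K * ε := by
        rw [hint gl hglint]
        refine hQdiff.trans ?_
        rw [← map_sub, F.norm_map]
        exact mul_le_mul_of_nonneg_left hglf hK0
      calc ‖F (C β f) - (memQ hφint β (F f)).toLp _‖
          ≤ ‖F (C β f) - F (C β gl)‖ + ‖F (C β gl) - (memQ hφint β (F f)).toLp _‖ :=
            norm_sub_le_norm_sub_add_norm_sub _ _ _
        _ ≤ ‖C β‖ * ε + K * ε := add_le_add t1 t2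
        _ = (‖C β‖ + K) * ε := by ring
    set D := F (C β f) - (memQ hφint β (F f)).toLp _ with hD
    have hc0 : 0 ≤ ‖C β‖ + K := add_nonneg (norm_nonneg _) hK0
    have h0 : ‖D‖ ≤ 0 := by
      by_contra hcon
      push_neg at hcon
      have he : (0 : ℝ) < 2 * (‖C β‖ + K + 1) := by positivity
      have hb2 := hb (‖D‖ / (2 * (‖C β‖ + K + 1))) (by positivity)
      have hd : ‖D‖ / (2 * (‖C β‖ + K + 1)) * (2 * (‖C β‖ + K + 1)) = ‖D‖ :=
        div_mul_cancel₀ _ he.ne'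
      nlinarith [hb2, hcon, hc0, hd, mul_pos hcon he]
    have : D = 0 := by
      rw [← norm_le_zero_iff]
      exact h0
    exact sub_eq_zero.mp this
  rw [key]
  exact (memQ hφint β (F f)).coeFn_toLp

end AuxLemmas

set_option maxHeartbeats 1000000 in
theorem stmt2
    (n : ℕ) (τ T : ℝ) (hτ : τ ∈ Set.Ioc (0 : ℝ) 1) (hT : 0 < T)
    (γ : ℝ → ℝ) (hγpos : ∀ t ∈ Set.Ioo 0 T, 0 < γ t)
    (hγint : IntegrableOn γ (Set.Ioc 0 T))
    -- the Fourier–Plancherel transform on L²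
    (F : L2 n ≃ₗᵢ[ℂ] L2 n)
    (hF : ∀ f : L2 n, Integrable (⇑f) volume →
      ⇑(F f) =ᵐ[volume] FourierTransform.fourier (⇑f))
    -- the operator A = 𝓕⁻¹ (ψ ·) 𝓕
    (A : L2 n →L[ℂ] L2 n)
    (hA : ∀ f : L2 n,
      ⇑(F (A f)) =ᵐ[volume] fun ξ => (psi n τ T γ ξ : ℂ) * (F f : Rn n → ℂ) ξ)
    -- the mollifier kernel φ and the convolution operators C_β
    (φ : Rn n → ℝ) (hφint : Integrable φ (volume : Measure (Rn n)))
    (hφ1 : ∫ x, φ x = 1)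
    (C : ℝ → (L2 n →L[ℂ] L2 n))
    (hC : ∀ β : ℝ, 0 < β → ∀ f : L2 n, ⇑(C β f) =ᵐ[volume] mollify n φ β ⇑f)
    -- R β g is the unique minimizer of J_β(·, A, g)
    (R : ℝ → L2 n → L2 n)
    (hR : ∀ β : ℝ, 0 < β → ∀ g : L2 n, ∀ u : L2 n,
      ‖A (R β g) - g‖ ^ 2 + ‖R β g - C β (R β g)‖ ^ 2 ≤ ‖A u - g‖ ^ 2 + ‖u - C β u‖ ^ 2) :
    ∀ u : L2 n, Tendsto (fun β : ℝ => R β (A u)) (𝓝[>] 0) (𝓝 u) := by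
  intro u
  set q : Rn n → ℂ := qsym φ with hq
  set ψ : Rn n → ℝ := psi n τ T γ with hψdef
  -- basic facts about ψ
  have hψpos : ∀ ξ, 0 < ψ ξ := fun ξ => Real.exp_pos _
  have hψcont : Continuous ψ := by
    rw [hψdef]
    unfold psi
    refine Real.continuous_exp.comp (Continuous.mul (Continuous.neg ?_) continuous_const)
    exact (continuous_const.mul continuous_norm).rpow_const
      (fun ξ => Or.inr (by linarith [hτ.1]))
  -- the ratio function
  set rr : ℝ → Rn n → ℝ := fun (β : ℝ) (ξ : Rn n) =>
    ‖1 - q (β • ξ)‖ ^ 2 / (ψ ξ ^ 2 + ‖1 - q (β • ξ)‖ ^ 2) with hrr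
  have hden : ∀ (β : ℝ) (ξ : Rn n), (0 : ℝ) < ψ ξ ^ 2 + ‖1 - q (β • ξ)‖ ^ 2 := fun β ξ =>
    add_pos_of_pos_of_nonneg (pow_pos (hψpos ξ) 2) (sq_nonneg _)
  have hrr0 : ∀ (β : ℝ) (ξ : Rn n), 0 ≤ rr β ξ := fun β ξ => div_nonneg (sq_nonneg _) (hden β ξ).le
  have hrr1 : ∀ (β : ℝ) (ξ : Rn n), rr β ξ ≤ 1 := fun β ξ =>
    (div_le_one (hden β ξ)).mpr (le_add_of_nonneg_left (sq_nonneg _))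
  set U : Rn n → ℂ := ⇑(F u) with hU
  -- the key norm identity
  have normeq : ∀ β : ℝ, 0 < β →
      ‖R β (A u) - u‖ ^ 2 = ∫ ξ, rr β ξ ^ 2 * ‖U ξ‖ ^ 2 := by
    intro β hβ
    set v : L2 n := R β (A u) with hv
    have orth : ∀ w : L2 n,
        (inner ℂ (A v - A u) (A w) : ℂ) + inner ℂ (v - C β v) (w - C β w) = 0 := by
      intro w
      apply variational
      intro c
      have h := hR β hβ (A u) (v + c • w)
      have e1 : A (v + c • w) - A u = (A v - A u) + c • A w := by
        rw [map_add, _root_.map_smul]; abel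
      have e2 : (v + c • w) - C β (v + c • w) = (v - C β v) + c • (w - C β w) := by
        rw [map_add, _root_.map_smul, smul_sub]; abel
      rw [e1, e2] at h
      exact h
    have hA1 : ⇑(F (A v - A u)) =ᵐ[volume]
        fun ξ => (ψ ξ : ℂ) * (⇑(F v) ξ - U ξ) := by
      rw [map_sub]
      filter_upwards [Lp.coeFn_sub (F (A v)) (F (A u)), hA v, hA u] with ξ e h1 h2
      rw [e]
      simp only [Pi.sub_apply]
      rw [h1, h2]
      ring
    have hC1 : ∀ w : L2 n, ⇑(F (w - C β w)) =ᵐ[volume]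
        fun ξ => (1 - q (β • ξ)) * ⇑(F w) ξ := by
      intro w
      rw [map_sub]
      filter_upwards [Lp.coeFn_sub (F w) (F (C β w)),
        multC F hF hφint C hC hβ w] with ξ e h1
      rw [e]
      simp only [Pi.sub_apply]
      rw [h1]
      ring
    set G : Rn n → ℂ := fun ξ =>
      (ψ ξ : ℂ) * (⇑(F (A v - A u)) ξ)
        + conj (1 - q (β • ξ)) * (⇑(F (v - C β v)) ξ) with hG
    have hK0 : (0 : ℝ) ≤ ∫ x, ‖φ x‖ := integral_nonneg fun x => norm_nonneg _
    have hqmcont : Continuous (fun ξ : Rn n => 1 - q (β • ξ)) :=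
      continuous_const.sub ((qsym_continuous hφint).comp (continuous_id.const_smul β))
    have hGmem : MemLp G 2 volume := by
      have m1 : MemLp (fun ξ => (ψ ξ : ℂ) * (⇑(F (A v - A u)) ξ)) 2 volume := by
        refine MemLp.of_le_mul (c := 1) (Lp.memLp (F (A v - A u)))
          (((Complex.continuous_ofReal.comp hψcont)).aestronglyMeasurable.mul
            (Lp.aestronglyMeasurable _)) (Eventually.of_forall fun ξ => ?_)
        rw [norm_mul, Complex.norm_real, Real.norm_eq_abs,
          abs_of_pos (hψpos ξ)]
        have h1 : ψ ξ ≤ 1 := by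
          rw [hψdef]
          unfold psi
          rw [Real.exp_le_one_iff]
          have hI : 0 ≤ ∫ t in Set.Ioc (0 : ℝ) T, γ t := by
            rw [MeasureTheory.integral_Ioc_eq_integral_Ioo]
            exact setIntegral_nonneg measurableSet_Ioo fun t ht => (hγpos t ht).le
          have ha : 0 ≤ (2 * Real.pi * ‖ξ‖) ^ (2 * τ) :=
            Real.rpow_nonneg (by positivity) _
          have := mul_nonneg ha hI
          linarith
        exact mul_le_mul_of_nonneg_right h1 (norm_nonneg _)
      have m2 : MemLp (fun ξ => conj (1 - q (β • ξ)) * (⇑(F (v - C β v)) ξ)) 2 volume := by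
        refine MemLp.of_le_mul (c := 1 + ∫ x, ‖φ x‖) (Lp.memLp (F (v - C β v)))
          (((RCLike.continuous_conj.comp hqmcont)).aestronglyMeasurable.mul
            (Lp.aestronglyMeasurable _)) (Eventually.of_forall fun ξ => ?_)
        rw [norm_mul, RCLike.norm_conj]
        refine mul_le_mul_of_nonneg_right ?_ (norm_nonneg _)
        refine (norm_sub_le _ _).trans ?_
        simp only [norm_one]
        exact add_le_add le_rfl (qsym_norm_le hφint _)
      exact m1.add m2
    set 𝒢 : L2 n := hGmem.toLp _ with h𝒢
    have hzero : 𝒢 = 0 := by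
      have inner_eq : ∀ w : L2 n, (inner ℂ 𝒢 (F w) : ℂ) = 0 := by
        intro w
        have e1 : (inner ℂ 𝒢 (F w) : ℂ)
            = (inner ℂ (F (A v - A u)) (F (A w)) : ℂ)
              + inner ℂ (F (v - C β v)) (F (w - C β w)) := by
          rw [L2.inner_def, L2.inner_def, L2.inner_def,
            ← integral_add (L2.integrable_inner _ _) (L2.integrable_inner _ _)]
          refine integral_congr_ae ?_
          filter_upwards [hGmem.coeFn_toLp, hA w, hC1 w] with ξ hGe hAe hCe
          simp only [RCLike.inner_apply]
          rw [hGe, hAe, hCe, hG]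
          simp only [map_add, map_mul, Complex.conj_ofReal, Complex.conj_conj]
          ring
        rw [e1, F.inner_map_map, F.inner_map_map]
        exact orth w
      have h2 := inner_eq (F.symm 𝒢)
      rw [F.apply_symm_apply] at h2
      exact inner_self_eq_zero.mp h2
    have hG0 : G =ᵐ[volume] 0 := by
      refine (hGmem.coeFn_toLp.symm.trans ?_)
      rw [← h𝒢, hzero]
      exact Lp.coeFn_zero _ _ _
    have hform : ⇑(F v - F u) =ᵐ[volume]
        fun ξ => -((rr β ξ : ℝ) : ℂ) * U ξ := by
      filter_upwards [hG0, hA1, hC1 v, Lp.coeFn_sub (F v) (F u)] with ξ h0 h1 h2 h3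
      have hGξ : (ψ ξ : ℂ) * ((ψ ξ : ℂ) * (⇑(F v) ξ - U ξ))
          + conj (1 - q (β • ξ)) * ((1 - q (β • ξ)) * ⇑(F v) ξ) = 0 := by
        rw [← h1, ← h2]
        exact h0
      rw [h3]
      simp only [Pi.sub_apply]
      have hmm : conj (1 - q (β • ξ)) * ((1 - q (β • ξ)) * ⇑(F v) ξ)
          = ((‖1 - q (β • ξ)‖ ^ 2 : ℝ) : ℂ) * ⇑(F v) ξ := by
        rw [← mul_assoc, Complex.conj_mul']
        push_cast
        ring
      rw [hmm] at hGξ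
      have hdξ := hden β ξ
      have hdC : ((ψ ξ ^ 2 + ‖1 - q (β • ξ)‖ ^ 2 : ℝ) : ℂ) ≠ 0 :=
        Complex.ofReal_ne_zero.mpr hdξ.ne'
      simp only [hrr]
      rw [Complex.ofReal_div]
      push_cast
      push_cast at hdC hGξ
      rw [← neg_div, div_mul_eq_mul_div, eq_div_iff hdC]
      linear_combination hGξ
    -- norm computation
    have hnorm : ‖v - u‖ ^ 2 = RCLike.re (inner ℂ (F v - F u) (F v - F u) : ℂ) := by
      rw [inner_self_eq_norm_sq, ← map_sub, F.norm_map]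
    rw [hnorm, L2.inner_def]
    have hint2 : (∫ ξ, (inner ℂ (⇑(F v - F u) ξ) (⇑(F v - F u) ξ) : ℂ))
        = ∫ ξ, ((rr β ξ ^ 2 * ‖U ξ‖ ^ 2 : ℝ) : ℂ) := by
      refine integral_congr_ae (hform.mono fun ξ h => ?_)
      have h' : ⇑(F v - F u) ξ = -((rr β ξ : ℝ) : ℂ) * U ξ := h
      show (inner ℂ (⇑(F v - F u) ξ) (⇑(F v - F u) ξ) : ℂ) = ((rr β ξ ^ 2 * ‖U ξ‖ ^ 2 : ℝ) : ℂ)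
      rw [RCLike.inner_apply', h']
      rw [show (conj (-((rr β ξ : ℝ) : ℂ) * U ξ)) * (-((rr β ξ : ℝ) : ℂ) * U ξ)
          = (((rr β ξ : ℝ) : ℂ)) ^ 2 * (conj (U ξ) * U ξ) from by
        rw [map_mul, map_neg, Complex.conj_ofReal]; ring]
      rw [Complex.conj_mul']
      push_cast
      ring
    rw [hint2]
    have e3 : (∫ ξ, ((rr β ξ ^ 2 * ‖U ξ‖ ^ 2 : ℝ) : ℂ))
        = ((∫ ξ, rr β ξ ^ 2 * ‖U ξ‖ ^ 2 : ℝ) : ℂ) := integral_ofReal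
    rw [e3]
    exact RCLike.ofReal_re _
  -- limit of the integrals
  have hUmeas : AEStronglyMeasurable U volume := Lp.aestronglyMeasurable (F u)
  have hU2meas : AEStronglyMeasurable (fun ξ => ‖U ξ‖ ^ 2) volume := by
    refine (hUmeas.norm.mul hUmeas.norm).congr (Eventually.of_forall fun ξ => ?_)
    simp [pow_two]
  have hUint : Integrable (fun ξ => ‖U ξ‖ ^ 2) volume := by
    have h := (Lp.memLp (F u)).integrable_norm_rpow (by norm_num) (by norm_num)
    refine h.congr (Eventually.of_forall fun ξ => ?_)
    show ‖U ξ‖ ^ ((2 : ℝ≥0∞).toReal) = ‖U ξ‖ ^ 2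
    have h2 : ((2 : ℝ≥0∞).toReal) = ((2 : ℕ) : ℝ) := by norm_num
    rw [h2, Real.rpow_natCast]
  have hI : Tendsto (fun β => ∫ ξ, rr β ξ ^ 2 * ‖U ξ‖ ^ 2) (𝓝[>] (0 : ℝ)) (𝓝 0) := by
    have h0 : (𝓝 (0 : ℝ)) = 𝓝 (∫ _ : Rn n, (0 : ℝ)) := by simp
    rw [h0]
    refine tendsto_integral_filter_of_dominated_convergence
      (fun ξ => ‖U ξ‖ ^ 2) ?_ ?_ hUint ?_
    · refine Eventually.of_forall fun β => ?_
      have hc1 : Continuous fun ξ : Rn n => rr β ξ ^ 2 := by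
        simp only [hrr]
        refine Continuous.pow ?_ 2
        refine Continuous.div ?_ ?_ (fun ξ => (hden β ξ).ne')
        · exact ((continuous_const.sub
            ((qsym_continuous hφint).comp (continuous_id.const_smul β))).norm.pow 2)
        · exact (hψcont.pow 2).add ((continuous_const.sub
            ((qsym_continuous hφint).comp (continuous_id.const_smul β))).norm.pow 2)
      exact hc1.aestronglyMeasurable.mul hU2meas
    · refine Eventually.of_forall fun β => Eventually.of_forall fun ξ => ?_
      have hb1 : 0 ≤ rr β ξ ^ 2 * ‖U ξ‖ ^ 2 := mul_nonneg (sq_nonneg _) (sq_nonneg _)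
      rw [Real.norm_eq_abs, _root_.abs_of_nonneg hb1]
      show rr β ξ ^ 2 * ‖U ξ‖ ^ 2 ≤ ‖U ξ‖ ^ 2
      have h6 : rr β ξ ^ 2 ≤ 1 := by nlinarith [hrr0 β ξ, hrr1 β ξ]
      exact mul_le_of_le_one_left (sq_nonneg _) h6
    · refine Eventually.of_forall fun ξ => ?_
      have hq0 : Tendsto (fun β : ℝ => q (β • ξ)) (𝓝[>] (0 : ℝ)) (𝓝 1) := by
        have hcont : Continuous fun β : ℝ => q (β • ξ) :=
          (qsym_continuous hφint).comp (continuous_id.smul continuous_const)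
        have h1 := hcont.tendsto 0
        rw [show q ((0 : ℝ) • ξ) = 1 by rw [zero_smul]; exact qsym_zero hφ1] at h1
        exact h1.mono_left nhdsWithin_le_nhds
      have hnum : Tendsto (fun β : ℝ => ‖1 - q (β • ξ)‖ ^ 2) (𝓝[>] (0 : ℝ)) (𝓝 0) := by
        have h2 : Tendsto (fun β : ℝ => 1 - q (β • ξ)) (𝓝[>] (0 : ℝ)) (𝓝 (1 - 1)) :=
          tendsto_const_nhds.sub hq0
        rw [sub_self] at h2
        have h3 := h2.norm.pow 2
        rw [norm_zero] at h3
        rw [show ((0 : ℝ)) ^ 2 = 0 by norm_num] at h3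
        exact h3
      have hden' : Tendsto (fun β : ℝ => ψ ξ ^ 2 + ‖1 - q (β • ξ)‖ ^ 2)
          (𝓝[>] (0 : ℝ)) (𝓝 (ψ ξ ^ 2)) := by
        have h5 := (tendsto_const_nhds (x := ψ ξ ^ 2) (f := 𝓝[>] (0 : ℝ))).add hnum
        rw [add_zero] at h5
        exact h5
      have hr : Tendsto (fun β : ℝ => rr β ξ) (𝓝[>] (0 : ℝ)) (𝓝 0) := by
        have h3 := hnum.div hden' ((pow_pos (hψpos ξ) 2).ne')
        simp only [zero_div] at h3
        exact h3
      have h4 : Tendsto (fun β : ℝ => rr β ξ ^ 2 * ‖U ξ‖ ^ 2) (𝓝[>] (0 : ℝ))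
          (𝓝 (0 ^ 2 * ‖U ξ‖ ^ 2)) := (hr.pow 2).mul_const _
      rw [show (0 : ℝ) ^ 2 * ‖U ξ‖ ^ 2 = 0 by ring] at h4
      exact h4
  have hsq : Tendsto (fun β => ‖R β (A u) - u‖ ^ 2) (𝓝[>] (0 : ℝ)) (𝓝 0) := by
    refine hI.congr' ?_
    filter_upwards [self_mem_nhdsWithin] with β hβ
    exact (normeq β hβ).symm
  have hnrm : Tendsto (fun β => ‖R β (A u) - u‖) (𝓝[>] (0 : ℝ)) (𝓝 0) := by
    have hs := (Real.continuous_sqrt.tendsto 0).comp hsq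
    rw [Real.sqrt_zero] at hs
    refine hs.congr fun β => ?_
    exact Real.sqrt_sq (norm_nonneg _)
  rw [tendsto_iff_norm_sub_tendsto_zero]
  exact hnrm
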